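/- For a permutation w and a positive integer k with w(k) > w(k+1) (k a descent of w), the diagram obtained from the Rothe diagram D(w) by deleting the box (k, w(k+1)) and then swapping rows k and k+1 equals the Rothe diagram D(w·s_k), where s_k is the transposition of k and k+1. -/
import Mathlib


/-- The Rothe diagram of a permutation `w` of the positive integers. -/
def RotheDiagram (w : Equiv.Perm ℕ+) : Set (ℕ+ × ℕ+) :=
  {p | p.2 < w p.1 ∧ p.1 < w.symm p.2}

/-- Swapping rows `k` and `k+1` of a diagram. -/
def swapRows (k : ℕ+) (D : Set (ℕ+ × ℕ+)) : Set (ℕ+ × ℕ+) :=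
  (fun p : ℕ+ × ℕ+ => (Equiv.swap k (k + 1) p.1, p.2)) '' D

lemma mem_swapRows (k : ℕ+) (D : Set (ℕ+ × ℕ+)) (i j : ℕ+) :
    (i, j) ∈ swapRows k D ↔ (Equiv.swap k (k + 1) i, j) ∈ D := by
  constructor
  · rintro ⟨⟨a, b⟩, h, heq⟩
    simp only [Prod.mk.injEq] at heq
    obtain ⟨h1, h2⟩ := heq
    rw [← h1, ← h2, Equiv.swap_apply_self]
    exact h
  · intro h
    exact ⟨(Equiv.swap k (k + 1) i, j), h, by simp [Equiv.swap_apply_self]⟩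

lemma pnat_lt_add_one_iff (a b : ℕ+) : a < b + 1 ↔ a ≤ b := by
  rw [← PNat.coe_lt_coe, ← PNat.coe_le_coe, PNat.add_coe, PNat.one_coe]
  omega

lemma pnat_add_one_lt {a b : ℕ+} (h : a < b) (hne : b ≠ a + 1) : a + 1 < b := by
  have hne' : (b : ℕ) ≠ (a : ℕ) + 1 := by
    intro hh
    exact hne (PNat.coe_injective (by simpa [PNat.add_coe] using hh))
  rw [← PNat.coe_lt_coe] at h ⊢
  simp only [PNat.add_coe, PNat.one_coe]
  omega

/-- If `k` is a descent of `w` (i.e. `w(k) > w(k+1)`), then deleting the box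
`(k, w(k+1))` from `D(w)` and swapping rows `k` and `k+1` yields `D(w·s_k)`. -/
theorem stmt7 (w : Equiv.Perm ℕ+) (k : ℕ+) (hk : w (k + 1) < w k) :
    swapRows k (RotheDiagram w \ {(k, w (k + 1))}) =
      RotheDiagram (w * Equiv.swap k (k + 1)) := by
  have hkk : k < k + 1 := by rw [pnat_lt_add_one_iff]
  have hkne : k ≠ k + 1 := hkk.ne
  have hsymm : ∀ x, (w * Equiv.swap k (k + 1)).symm x
      = Equiv.swap k (k + 1) (w.symm x) := by
    intro x
    rw [Equiv.symm_apply_eq]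
    simp [Equiv.Perm.mul_apply, Equiv.swap_apply_self]
  ext ⟨i, j⟩
  rw [mem_swapRows]
  simp only [RotheDiagram, Set.mem_diff, Set.mem_setOf_eq, Set.mem_singleton_iff,
    Prod.mk.injEq, Equiv.Perm.mul_apply, hsymm, not_and]
  constructor
  · rintro ⟨⟨h1, h2⟩, h3⟩
    refine ⟨h1, ?_⟩
    rcases eq_or_ne k i with rfl | hik'
    all_goals try (have hik := hik'.symm)
    · rw [Equiv.swap_apply_left] at h1 h2
      have hm1 : w.symm j ≠ k := by
        intro h
        have hj : j = w k := by rw [← h, Equiv.apply_symm_apply]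
        rw [hj] at h1
        exact lt_irrefl _ (h1.trans hk)
      have hm2 : w.symm j ≠ k + 1 := by
        intro h; rw [← h, Equiv.apply_symm_apply] at h1
        exact absurd h1 (lt_irrefl _)
      rw [Equiv.swap_apply_of_ne_of_ne hm1 hm2]
      exact hkk.trans h2
    rcases eq_or_ne (k + 1) i with rfl | hik1'
    all_goals try (have hik1 := hik1'.symm)
    · rw [Equiv.swap_apply_right] at h1 h2 h3
      have hm1 : w.symm j ≠ k := by
        intro h; rw [← h, Equiv.apply_symm_apply] at h1
        exact absurd h1 (lt_irrefl _)
      have hm2 : w.symm j ≠ k + 1 := by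
        intro h
        apply h3 rfl
        rw [← h, Equiv.apply_symm_apply]
      rw [Equiv.swap_apply_of_ne_of_ne hm1 hm2]
      exact pnat_add_one_lt h2 hm2
    · rw [Equiv.swap_apply_of_ne_of_ne hik hik1] at h1 h2
      rcases eq_or_ne (w.symm j) k with hm | hm
      · rw [hm, Equiv.swap_apply_left]
        rw [hm] at h2
        exact h2.trans hkk
      rcases eq_or_ne (w.symm j) (k + 1) with hm1 | hm1
      · rw [hm1, Equiv.swap_apply_right]
        rw [hm1, pnat_lt_add_one_iff] at h2
        exact lt_of_le_of_ne h2 hik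
      · rw [Equiv.swap_apply_of_ne_of_ne hm hm1]
        exact h2
  · rintro ⟨h1, h2⟩
    rcases eq_or_ne k i with rfl | hik'
    all_goals try (have hik := hik'.symm)
    · rw [Equiv.swap_apply_left] at h1 ⊢
      have hm1 : w.symm j ≠ k := by
        intro h
        have hj : j = w k := by rw [← h, Equiv.apply_symm_apply]
        rw [hj] at h1
        exact lt_irrefl _ (h1.trans hk)
      have hm2 : w.symm j ≠ k + 1 := by
        intro h; rw [← h, Equiv.apply_symm_apply] at h1
        exact absurd h1 (lt_irrefl _)
      rw [Equiv.swap_apply_of_ne_of_ne hm1 hm2] at h2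
      exact ⟨⟨h1, pnat_add_one_lt h2 hm2⟩, fun h => absurd h.symm hkne⟩
    rcases eq_or_ne (k + 1) i with rfl | hik1'
    all_goals try (have hik1 := hik1'.symm)
    · rw [Equiv.swap_apply_right] at h1 ⊢
      have hm1 : w.symm j ≠ k := by
        intro h; rw [← h, Equiv.apply_symm_apply] at h1
        exact absurd h1 (lt_irrefl _)
      rcases eq_or_ne (w.symm j) (k + 1) with hm2 | hm2
      · rw [hm2, Equiv.swap_apply_right] at h2
        exact absurd (hkk.trans h2) (lt_irrefl _)
      · rw [Equiv.swap_apply_of_ne_of_ne hm1 hm2] at h2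
        refine ⟨⟨h1, hkk.trans h2⟩, fun _ hj => ?_⟩
        apply hm2
        rw [hj, Equiv.symm_apply_apply]
    · rw [Equiv.swap_apply_of_ne_of_ne hik hik1] at h1 ⊢
      refine ⟨⟨h1, ?_⟩, fun h => absurd h hik⟩
      rcases eq_or_ne (w.symm j) k with hm | hm
      · rw [hm, Equiv.swap_apply_left] at h2
        rw [hm]
        rw [pnat_lt_add_one_iff] at h2
        exact lt_of_le_of_ne h2 hik
      rcases eq_or_ne (w.symm j) (k + 1) with hm1 | hm1
      · rw [hm1, Equiv.swap_apply_right] at h2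
        rw [hm1]
        exact h2.trans hkk
      · rwa [Equiv.swap_apply_of_ne_of_ne hm hm1] at h2
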